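/- Consider a syntactically safe core-language algorithm satisfying Assumption (A), and let ψ be a unifier whose round predicates imply those of the global predicate. If bias(θ) →ψ f is a phase transition and either thr_u^1 ≤ thr_m^{1,k} or 1 − thr̄ ≤ θ ≤ thr̄, then f = solo or f = solo^a. -/

import Mathlib

/-!
A process only ever adopts a value it has heard, and it adopts some value as soon as its
heard-of multiset passes the threshold of an instruction that applies to it. Starting from an
`{a, b}`-valued tuple, the rounds up to the equalizer round `e` therefore keep the tuple
`{a, b}`-valued: in the non-preserving rounds `2, …, e` the threshold of `ψ` dominates both
the uni and the mult threshold; in round 1 it dominates the mult threshold, and a multiset with a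
single value either passes the uni threshold or, by the bound on `θ`, is too small to satisfy
`ψ` at all. In round `e` all processes hear the same multiset, hence adopt the same value `v`,
and the solo-safe rounds `e + 1, …, ir` keep every process at `v`, which becomes the new input.
-/

open Classical

namespace HO

/-! ### Values

`none` is the undefined value `?`; defined values are natural numbers, where
`some 0` plays the role of `a` and `some 1` the role of `b` (so `a < b`). -/

abbrev Val := Option ℕ

def aVal : ℕ := 0
def bVal : ℕ := 1

/-! ### Operations -/

inductive Op where
  | min : Op
  | smor : Op

/-- Minimum of a multiset of defined values (`none` if the multiset is empty). -/
noncomputable def msMin (S : Multiset ℕ) : Option ℕ :=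
  if h : S.toFinset.Nonempty then some (S.toFinset.min' h) else none

/-- Smallest most frequent value of a multiset (`none` if the multiset is empty). -/
noncomputable def msSmor (S : Multiset ℕ) : Option ℕ :=
  if h : (S.toFinset.filter fun v => ∀ w ∈ S.toFinset, S.count w ≤ S.count v).Nonempty
  then some ((S.toFinset.filter fun v => ∀ w ∈ S.toFinset, S.count w ≤ S.count v).min' h)
  else none

noncomputable def Op.apply : Op → Multiset ℕ → Option ℕ
  | Op.min, S => msMin S
  | Op.smor, S => msSmor S

/-! ### Rounds

A round consists of at most one `uni` instruction followed by a list of `mult`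
instructions with non-increasing thresholds, all thresholds lying in `[0,1)`. -/

structure Round where
  uniThr : Option ℝ
  mults : List (ℝ × Op)
  wfU : ∀ t ∈ uniThr, 0 ≤ t ∧ t < 1
  wfM : ∀ q ∈ mults, 0 ≤ q.1 ∧ q.1 < 1
  sorted : (mults.map Prod.fst).Chain' (· ≥ ·)

def Round.hasUni (R : Round) : Prop := R.uniThr.isSome = true
def Round.hasMult (R : Round) : Prop := R.mults ≠ []

/-- `thr_u^i`: the threshold of the uni instruction, `-1` if absent. -/
noncomputable def Round.thrU (R : Round) : ℝ := R.uniThr.getD (-1)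

noncomputable def minThr : List ℝ → ℝ
  | [] => -1
  | [t] => t
  | t :: ts => min t (minThr ts)

/-- `thr_m^{i,k}`: the smallest threshold of a mult instruction, `-1` if absent. -/
noncomputable def Round.thrM (R : Round) : ℝ := minThr (R.mults.map Prod.fst)

/-- Result of the first applicable `mult` instruction. -/
noncomputable def firstMult (n : ℕ) (S : Multiset ℕ) : List (ℝ × Op) → Option ℕ
  | [] => none
  | (t, op) :: rest =>
      if 1 < S.toFinset.card ∧ t * n < (S.card : ℝ) then op.apply S
      else firstMult n S rest

/-- `update_i(H)`: the result of the first instruction of the round whose condition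
is satisfied by `H − {?}`, and `?` (i.e. `none`) if no condition applies. -/
noncomputable def Round.update (R : Round) (n : ℕ) (H : Multiset Val) : Option ℕ :=
  if ∃ t ∈ R.uniThr,
      (H.filterMap id).toFinset.card = 1 ∧ t * n < ((H.filterMap id).card : ℝ)
  then msMin (H.filterMap id)
  else firstMult n (H.filterMap id) R.mults

/-! ### Communication predicates for a round -/

/-- A conjunction of atomic communication predicates for one round: possibly
`φ_=` (field `eq`) and possibly `φ_thr` (field `thr`, with `0 ≤ thr < 1`). -/
structure RoundPred where
  eq : Bool
  thr : Option ℝ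
  wf : ∀ t ∈ thr, 0 ≤ t ∧ t < 1

/-- `thr_i(ψ)`: the threshold appearing in the predicate, `-1` if absent. -/
noncomputable def RoundPred.thrVal (φ : RoundPred) : ℝ := φ.thr.getD (-1)

def RoundPred.isEqualizer (φ : RoundPred) : Prop := φ.eq = true

/-- Satisfaction of a round predicate by a tuple of heard-of multisets. -/
def RoundPred.sat {α : Type} (φ : RoundPred) (n : ℕ) (Hs : Fin n → Multiset α) : Prop :=
  (φ.eq = true → ∀ p q, Hs p = Hs q) ∧
  ∀ t ∈ φ.thr, ∀ p, t * n < ((Hs p).card : ℝ)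

/-- Logical implication between round predicates. -/
def RoundPred.implies (φ φ' : RoundPred) : Prop :=
  ∀ (α : Type) (n : ℕ) (Hs : Fin n → Multiset α), φ.sat n Hs → φ'.sat n Hs

/-! ### Tuples of values -/

/-- The multiset of values of a tuple. -/
def msetOf {n : ℕ} (f : Fin n → Val) : Multiset Val := Finset.univ.val.map f

def soloB (n : ℕ) : Fin n → Val := fun _ => some bVal
def soloA (n : ℕ) : Fin n → Val := fun _ => some aVal
def soloQ (n : ℕ) : Fin n → Val := fun _ => none

/-- `bias(θ)`: a tuple over `{a,b}` with `θ·n` entries equal to `b`. -/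
def isBias {n : ℕ} (θ : ℝ) (f : Fin n → Val) : Prop :=
  (∀ p, f p = some aVal ∨ f p = some bVal) ∧
  ((Finset.univ.filter fun p => f p = some bVal).card : ℝ) = θ * n

/-- `spread = bias(1/2)`. -/
def isSpread {n : ℕ} (f : Fin n → Val) : Prop := isBias (1/2) f

/-- `bias^?(θ)`: a tuple over `{?,b}` with `θ·n` entries equal to `b`. -/
def isBiasQ {n : ℕ} (θ : ℝ) (f : Fin n → Val) : Prop :=
  (∀ p, f p = none ∨ f p = some bVal) ∧
  ((Finset.univ.filter fun p => f p = some bVal).card : ℝ) = θ * n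

/-- `bias_a^?(θ)`: a tuple over `{?,a}` with `θ·n` entries equal to `a`. -/
def isBiasQa {n : ℕ} (θ : ℝ) (f : Fin n → Val) : Prop :=
  (∀ p, f p = none ∨ f p = some aVal) ∧
  ((Finset.univ.filter fun p => f p = some aVal).card : ℝ) = θ * n

/-! ### Round transitions -/

/-- Round transition `f →[φ]_i f'`: every process receives a sub-multiset of the
multiset of sent values, the tuple of heard-of multisets jointly satisfies `φ`,
and every process updates its variable accordingly. -/
def roundTrans (R : Round) (φ : RoundPred) {n : ℕ} (f f' : Fin n → Val) : Prop :=
  ∃ Hs : Fin n → Multiset Val,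
    (∀ p, Hs p ≤ msetOf f) ∧ φ.sat n Hs ∧ ∀ p, f' p = R.update n (Hs p)

/-- `d ∈ fire_i(f,φ)`. -/
def fire (R : Round) (φ : RoundPred) {n : ℕ} (f : Fin n → Val) (d : Val) : Prop :=
  ∃ f' : Fin n → Val, roundTrans R φ f f' ∧ ∃ p, f' p = d

/-! ### Algorithms -/

/-- An algorithm of the core language: rounds `1,…,r` (`r ≥ 2`), with a designated
input-update round `ir` (`1 ≤ ir < r`). -/
structure Algo where
  r : ℕ
  rounds : ℕ → Round
  ir : ℕ
  two_le_r : 2 ≤ r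
  one_le_ir : 1 ≤ ir
  ir_lt_r : ir < r

noncomputable def Algo.thrU (A : Algo) (i : ℕ) : ℝ := (A.rounds i).thrU
noncomputable def Algo.thrM (A : Algo) (i : ℕ) : ℝ := (A.rounds i).thrM
def Algo.hasUni (A : Algo) (i : ℕ) : Prop := (A.rounds i).hasUni
def Algo.hasMult (A : Algo) (i : ℕ) : Prop := (A.rounds i).hasMult

/-- A phase predicate: a conjunction of atomic predicates for every round. -/
abbrev PhasePred := ℕ → RoundPred

/-- Phase transition `(f,d) →ψ (f',d')`. -/
def phaseTrans (A : Algo) (ψ : PhasePred) {n : ℕ} (f d f' d' : Fin n → Val) : Prop :=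
  ∃ g : ℕ → Fin n → Val,
    g 0 = f ∧
    (∀ i, 1 ≤ i → i ≤ A.r → roundTrans (A.rounds i) (ψ i) (g (i - 1)) (g i)) ∧
    (∀ p, f' p = if g A.ir p = none then f p else g A.ir p) ∧
    (∀ p, d' p = if d p = none then g A.r p else d p)

/-- A chain of round transitions for rounds `k,…,l`. -/
def roundChain (A : Algo) (ψ : PhasePred) (k l : ℕ) {n : ℕ} (f f' : Fin n → Val) : Prop :=
  ∃ g : ℕ → Fin n → Val,
    g (k - 1) = f ∧ g l = f' ∧
    ∀ i, k ≤ i → i ≤ l → roundTrans (A.rounds i) (ψ i) (g (i - 1)) (g i)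

/-! ### Syntactic notions -/

/-- Round `i` is preserving w.r.t. `ψ`. -/
def Algo.preserving (A : Algo) (ψ : PhasePred) (i : ℕ) : Prop :=
  ¬ A.hasUni i ∨ ¬ A.hasMult i ∨ (ψ i).thrVal < max (A.thrU i) (A.thrM i)

/-- Round `i` is solo-safe w.r.t. `ψ`. -/
def Algo.soloSafe (A : Algo) (ψ : PhasePred) (i : ℕ) : Prop :=
  0 ≤ A.thrU i ∧ A.thrU i ≤ (ψ i).thrVal

/-- The border threshold `thr̄ = max(1 − thr_u^1, 1 − thr_m^{1,k}/2)`. -/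
noncomputable def Algo.borderThr (A : Algo) : ℝ :=
  max (1 - A.thrU 1) (1 - A.thrM 1 / 2)

/-- `ψ` is a decider: all rounds are solo-safe w.r.t. `ψ`. -/
def Algo.decider (A : Algo) (ψ : PhasePred) : Prop :=
  ∀ i, 1 ≤ i → i ≤ A.r → A.soloSafe ψ i

/-- `ψ` is a unifier. -/
def Algo.unifier (A : Algo) (ψ : PhasePred) : Prop :=
  A.thrM 1 ≤ (ψ 1).thrVal ∧
  (A.thrU 1 ≤ (ψ 1).thrVal ∨ A.borderThr ≤ (ψ 1).thrVal) ∧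
  ∃ i, 1 ≤ i ∧ i ≤ A.ir ∧ (ψ i).isEqualizer ∧
    (∀ j, 2 ≤ j → j ≤ i → ¬ A.preserving ψ j) ∧
    (∀ j, i < j → j ≤ A.ir → A.soloSafe ψ j)

/-- The algorithm is syntactically safe. -/
def Algo.syntSafe (A : Algo) : Prop :=
  A.hasMult 1 ∧
  (∀ i, 1 ≤ i → i ≤ A.r → A.hasUni i) ∧
  (∀ q ∈ (A.rounds 1).mults, q.2 = Op.smor) ∧
  1 - A.thrU (A.ir + 1) ≤ A.thrM 1 / 2 ∧
  1 - A.thrU (A.ir + 1) ≤ A.thrU 1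

/-- Assumption (A) relative to the global predicate `gl`. -/
def Algo.assumptionA (A : Algo) (gl : PhasePred) : Prop :=
  ∀ i, 1 ≤ i → i ≤ A.r →
    (∀ j, 1 ≤ j → j < i → ¬ A.preserving gl j) →
    (A.hasUni i → (gl i).thrVal ≤ A.thrU i) ∧
    (A.hasMult i → (gl i).thrVal ≤ A.thrM i)

/-- Proviso (P): the global predicate has no equalizer and round `ir+1` has no
mult instruction. -/
def Algo.provisoP (A : Algo) (gl : PhasePred) : Prop :=
  (∀ i, 1 ≤ i → i ≤ A.r → ¬ (gl i).isEqualizer) ∧ ¬ A.hasMult (A.ir + 1)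

/-- Removing all mult instructions of a round. -/
def Round.dropMults (R : Round) : Round :=
  { uniThr := R.uniThr, mults := [], wfU := R.wfU,
    wfM := by simp, sorted := by first | exact List.IsChain.nil | exact List.Chain'.nil | simp [List.Chain'] }

/-- Removing all mult instructions of round `i` of an algorithm. -/
def Algo.dropMultsAt (A : Algo) (i : ℕ) : Algo :=
  { A with rounds := fun j => if j = i then (A.rounds j).dropMults else A.rounds j }

/-! ### Communication predicates, executions, consensus -/

/-- A communication predicate `(G ψ̄) ∧ F(ψ^1 ∧ F(ψ^2 ∧ … ∧ F ψ^k))`: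
a global phase predicate and sporadic phase predicates `ψ^1,…,ψ^k`. -/
structure CommPred where
  glob : PhasePred
  k : ℕ
  spor : ℕ → PhasePred

/-- Roundwise implication between phase predicates of an algorithm. -/
def predImplies (A : Algo) (ψ ψ' : PhasePred) : Prop :=
  ∀ i, 1 ≤ i → i ≤ A.r → (ψ i).implies (ψ' i)

/-- An execution of an algorithm respecting a communication predicate: an infinite
sequence of phase transitions under the global predicate, together with an
increasing sequence of times at which the sporadic predicates hold. -/
structure Exec (A : Algo) (C : CommPred) (n : ℕ) where
  inp : ℕ → Fin n → Val
  dec : ℕ → Fin n → Val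
  inp0 : ∀ p, inp 0 p ≠ none
  dec0 : ∀ p, dec 0 p = none
  step : ∀ s, phaseTrans A C.glob (inp s) (dec s) (inp (s + 1)) (dec (s + 1))
  sporTime : ℕ → ℕ
  mono : StrictMono sporTime
  sporStep : ∀ i, 1 ≤ i → i ≤ C.k →
    phaseTrans A (C.spor i) (inp (sporTime i)) (dec (sporTime i))
      (inp (sporTime i + 1)) (dec (sporTime i + 1))

/-- Agreement: in every reachable state, any two non-`?` decision values coincide. -/
def Agreement (A : Algo) (C : CommPred) : Prop :=
  ∀ n, 0 < n → ∀ E : Exec A C n, ∀ s p q v w,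
    E.dec s p = some v → E.dec s q = some w → v = w

/-- Termination: every execution reaches a state where all processes have decided. -/
def Termination (A : Algo) (C : CommPred) : Prop :=
  ∀ n, 0 < n → ∀ E : Exec A C n, ∃ s, ∀ p, E.dec s p ≠ none

/-- Solving consensus: agreement and termination. -/
def SolvesConsensus (A : Algo) (C : CommPred) : Prop :=
  Agreement A C ∧ Termination A C

lemma msMin_mem {S : Multiset ℕ} {v : ℕ} (h : msMin S = some v) : v ∈ S := by
  unfold msMin at h
  split_ifs at h with hS
  obtain rfl := Option.some.inj h
  exact Multiset.mem_toFinset.mp (S.toFinset.min'_mem hS)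

lemma msMin_ne_none {S : Multiset ℕ} (hS : S ≠ 0) : msMin S ≠ none := by
  simp [msMin, Multiset.toFinset_nonempty.mpr hS]

lemma msMin_eq_of_forall_eq {S : Multiset ℕ} {v : ℕ} (hS : S ≠ 0) (hv : ∀ w ∈ S, w = v) :
    msMin S = some v := by
  obtain ⟨w, hw⟩ := Option.ne_none_iff_exists'.mp (msMin_ne_none hS)
  rw [hw, hv w (msMin_mem hw)]

lemma msSmor_mem {S : Multiset ℕ} {v : ℕ} (h : msSmor S = some v) : v ∈ S := by
  unfold msSmor at h
  split_ifs at h with hS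
  obtain rfl := Option.some.inj h
  exact Multiset.mem_toFinset.mp (Finset.filter_subset _ _ (Finset.min'_mem _ hS))

lemma msSmor_ne_none {S : Multiset ℕ} (hS : S ≠ 0) : msSmor S ≠ none := by
  obtain ⟨b, hb, hmax⟩ :=
    S.toFinset.exists_max_image S.count (Multiset.toFinset_nonempty.mpr hS)
  have hmost : (S.toFinset.filter fun v => ∀ w ∈ S.toFinset, S.count w ≤ S.count v).Nonempty :=
    ⟨b, Finset.mem_filter.mpr ⟨hb, hmax⟩⟩
  rw [msSmor, dif_pos hmost]
  exact Option.some_ne_none _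

lemma Op.apply_mem {op : Op} {S : Multiset ℕ} {v : ℕ} (h : op.apply S = some v) : v ∈ S := by
  cases op
  · exact msMin_mem h
  · exact msSmor_mem h

lemma Op.apply_ne_none (op : Op) {S : Multiset ℕ} (hS : S ≠ 0) : op.apply S ≠ none := by
  cases op
  · exact msMin_ne_none hS
  · exact msSmor_ne_none hS

lemma minThr_mem {L : List ℝ} (hL : L ≠ []) : minThr L ∈ L := by
  induction L with
  | nil => exact absurd rfl hL
  | cons t L ih =>
    cases L with
    | nil => simp [minThr]
    | cons s L =>
      rcases min_choice t (minThr (s :: L)) with h | h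
      · simp [minThr, h]
      · exact List.mem_cons_of_mem _ (by simp only [minThr, h] at ih ⊢; exact ih (by simp))

lemma firstMult_mem {n : ℕ} {S : Multiset ℕ} {v : ℕ} :
    ∀ {L : List (ℝ × Op)}, firstMult n S L = some v → v ∈ S
  | [], h => by simp [firstMult] at h
  | (t, op) :: L, h => by
    unfold firstMult at h
    split_ifs at h
    · exact op.apply_mem h
    · exact firstMult_mem h

lemma firstMult_ne_none {n : ℕ} {S : Multiset ℕ} (hS : 1 < S.toFinset.card) :
    ∀ {L : List (ℝ × Op)}, (∃ q ∈ L, q.1 * n < (S.card : ℝ)) → firstMult n S L ≠ none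
  | [], ⟨_, hq, _⟩ => absurd hq List.not_mem_nil
  | (t, op) :: L, ⟨q, hq, hqS⟩ => by
    have hS0 : S ≠ 0 := by rintro rfl; simp at hS
    unfold firstMult
    split_ifs with hfire
    · exact op.apply_ne_none hS0
    · rcases List.mem_cons.mp hq with rfl | hqL
      · exact absurd ⟨hS, hqS⟩ hfire
      · exact firstMult_ne_none hS ⟨q, hqL, hqS⟩

lemma Round.thrM_mem {R : Round} (hM : R.hasMult) : ∃ q ∈ R.mults, q.1 = R.thrM := by
  simpa [Round.thrM] using
    minThr_mem (L := R.mults.map Prod.fst) (by simpa [Round.hasMult] using hM)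

lemma Round.thrM_nonneg {R : Round} (hM : R.hasMult) : 0 ≤ R.thrM := by
  obtain ⟨q, hq, hqM⟩ := Round.thrM_mem hM
  exact hqM ▸ (R.wfM q hq).1

lemma Round.thrU_nonneg {R : Round} (hU : R.hasUni) : 0 ≤ R.thrU := by
  obtain ⟨t, ht⟩ := Option.isSome_iff_exists.mp hU
  simpa [Round.thrU, ht] using (R.wfU t ht).1

lemma Round.uniThr_eq_of_thrU_nonneg {R : Round} (h : 0 ≤ R.thrU) : R.uniThr = some R.thrU := by
  cases hu : R.uniThr with
  | none => simp [Round.thrU, hu] at h; linarith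
  | some t => simp [Round.thrU, hu]

lemma map_some_filterMap_id {α : Type*} {H : Multiset (Option α)} (h : ∀ x ∈ H, x ≠ none) :
    (H.filterMap id).map some = H := by
  induction H using Multiset.induction with
  | empty => simp
  | cons x H ih =>
    obtain ⟨v, rfl⟩ := Option.ne_none_iff_exists'.mp (h x (Multiset.mem_cons_self x H))
    rw [Multiset.filterMap_cons_some id _ _ rfl, Multiset.map_cons,
      ih fun y hy => h y (Multiset.mem_cons_of_mem hy)]

lemma Round.update_mem {R : Round} {n : ℕ} {H : Multiset Val} {v : ℕ}
    (h : R.update n H = some v) : some v ∈ H := by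
  have hv : v ∈ H.filterMap id := by
    unfold Round.update at h
    split_ifs at h
    · exact msMin_mem h
    · exact firstMult_mem h
  simpa using hv

lemma Round.update_eq_of_forall_eq_some {R : Round} {n : ℕ} {H : Multiset Val} {v : ℕ}
    (hU : 0 ≤ R.thrU) (hH : ∀ x ∈ H, x = some v) (hthr : R.thrU * n < (H.card : ℝ)) :
    R.update n H = some v := by
  have hH0 : H ≠ 0 := by
    rintro rfl
    simp only [Multiset.card_zero, Nat.cast_zero] at hthr
    exact hthr.not_ge (mul_nonneg hU (Nat.cast_nonneg n))
  have hS : H.filterMap id = Multiset.replicate H.card v := by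
    conv_lhs => rw [Multiset.eq_replicate_card.mpr hH]
    rw [← Multiset.map_replicate, Multiset.filterMap_map]
    exact Multiset.filterMap_some _
  obtain ⟨x, hx⟩ := Multiset.exists_mem_of_ne_zero hH0
  have hvS : v ∈ H.filterMap id := by simpa [← hH x hx] using hx
  have huni : ∃ t ∈ R.uniThr,
      (H.filterMap id).toFinset.card = 1 ∧ t * n < ((H.filterMap id).card : ℝ) :=
    ⟨R.thrU, Round.uniThr_eq_of_thrU_nonneg hU, by simp [hS, hH0], by simpa [hS] using hthr⟩
  rw [Round.update, if_pos huni]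
  exact msMin_eq_of_forall_eq (by rintro h; simp [h] at hvS)
    fun w hw => Multiset.eq_of_mem_replicate (hS ▸ hw)

lemma Round.update_ne_none_of_ne {R : Round} {n : ℕ} {H : Multiset Val} {x y : Val}
    (hM : R.hasMult) (hH : ∀ z ∈ H, z ≠ none) (hx : x ∈ H) (hy : y ∈ H) (hxy : x ≠ y)
    (hthr : R.thrM * n < (H.card : ℝ)) :
    R.update n H ≠ none := by
  obtain ⟨a, rfl⟩ := Option.ne_none_iff_exists'.mp (hH x hx)
  obtain ⟨b, rfl⟩ := Option.ne_none_iff_exists'.mp (hH y hy)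
  have htwo : 1 < (H.filterMap id).toFinset.card :=
    Finset.one_lt_card.mpr ⟨a, by simpa using hx, b, by simpa using hy, by simpa using hxy⟩
  have hcard : (H.filterMap id).card = H.card := by
    conv_rhs => rw [← map_some_filterMap_id hH]
    rw [Multiset.card_map]
  have hnuni : ¬ ∃ t ∈ R.uniThr,
      (H.filterMap id).toFinset.card = 1 ∧ t * n < ((H.filterMap id).card : ℝ) :=
    fun ⟨_, _, h1, _⟩ => by omega
  obtain ⟨q, hq, hqM⟩ := Round.thrM_mem hM
  rw [Round.update, if_neg hnuni]
  exact firstMult_ne_none htwo ⟨q, hq, by rwa [hqM, hcard]⟩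

lemma RoundPred.sat.thrVal_mul_lt {α : Type} {φ : RoundPred} {n : ℕ} {Hs : Fin n → Multiset α}
    (h : φ.sat n Hs) (p : Fin n) : φ.thrVal * n < ((Hs p).card : ℝ) := by
  cases ht : φ.thr with
  | none =>
    have hn : (0 : ℝ) < n := by exact_mod_cast p.pos
    simp only [RoundPred.thrVal, ht, Option.getD_none]
    linarith [(Nat.cast_nonneg (Hs p).card : (0 : ℝ) ≤ _)]
  | some t => simpa [RoundPred.thrVal, ht] using h.2 t ht p

lemma msetOf_mem {n : ℕ} {f : Fin n → Val} {x : Val} (hx : x ∈ msetOf f) : ∃ p, f p = x := by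
  obtain ⟨p, -, hp⟩ := Multiset.mem_map.mp hx
  exact ⟨p, hp⟩

lemma msetOf_count {n : ℕ} (f : Fin n → Val) (x : Val) :
    (msetOf f).count x = (Finset.univ.filter fun p => f p = x).card := by
  rw [msetOf, Multiset.count_map]
  change _ = Multiset.card (Finset.univ.filter fun p => f p = x).val
  rw [Finset.filter_val]
  exact congrArg Multiset.card (Multiset.filter_congr fun _ _ => eq_comm)

lemma roundTrans_mem {R : Round} {φ : RoundPred} {n : ℕ} {f f' : Fin n → Val} {V : Set Val}
    (htr : roundTrans R φ f f') (hf : ∀ p, f p ∈ V)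
    (hdef : ∀ H ≤ msetOf f, φ.thrVal * n < (H.card : ℝ) → R.update n H ≠ none) :
    ∀ p, f' p ∈ V := by
  obtain ⟨Hs, hsub, hsat, hupd⟩ := htr
  intro p
  obtain ⟨v, hv⟩ := Option.ne_none_iff_exists'.mp (hdef _ (hsub p) (hsat.thrVal_mul_lt p))
  obtain ⟨q, hq⟩ := msetOf_mem (Multiset.mem_of_le (hsub p) (Round.update_mem hv))
  rw [hupd p, hv, ← hq]
  exact hf q

lemma roundTrans_mem_of_hasUni_hasMult {R : Round} {φ : RoundPred} {n : ℕ} {f f' : Fin n → Val}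
    {V : Set Val} (hV : none ∉ V) (htr : roundTrans R φ f f') (hf : ∀ p, f p ∈ V)
    (hU : R.hasUni) (hM : R.hasMult) (hMφ : R.thrM ≤ φ.thrVal)
    (hUφ : ∀ H ≤ msetOf f, φ.thrVal * n < (H.card : ℝ) →
      ∀ v, (∀ x ∈ H, x = some v) → R.thrU * n < (H.card : ℝ)) :
    ∀ p, f' p ∈ V := by
  refine roundTrans_mem htr hf fun H hH hφH => ?_
  have hdef : ∀ x ∈ H, x ≠ none := fun x hx => by
    obtain ⟨q, rfl⟩ := msetOf_mem (Multiset.mem_of_le hH hx)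
    exact fun hq => hV (hq ▸ hf q)
  have hMH : R.thrM * n < (H.card : ℝ) :=
    lt_of_le_of_lt (mul_le_mul_of_nonneg_right hMφ (Nat.cast_nonneg n)) hφH
  by_cases hsingle : ∃ v, ∀ x ∈ H, x = some v
  · obtain ⟨v, hv⟩ := hsingle
    rw [Round.update_eq_of_forall_eq_some (Round.thrU_nonneg hU) hv (hUφ H hH hφH v hv)]
    exact Option.some_ne_none v
  · have hH0 : H ≠ 0 := by
      rintro rfl
      simp only [Multiset.card_zero, Nat.cast_zero] at hMH
      exact hMH.not_ge (mul_nonneg (Round.thrM_nonneg hM) (Nat.cast_nonneg n))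
    obtain ⟨x, hx⟩ := Multiset.exists_mem_of_ne_zero hH0
    obtain ⟨a, rfl⟩ := Option.ne_none_iff_exists'.mp (hdef x hx)
    obtain ⟨y, hy, hya⟩ : ∃ y ∈ H, y ≠ some a := by
      by_contra! hall
      exact hsingle ⟨a, hall⟩
    exact Round.update_ne_none_of_ne hM hdef hx hy hya.symm hMH

lemma roundTrans_eq_of_isEqualizer {R : Round} {φ : RoundPred} {n : ℕ} {f f' : Fin n → Val}
    (hφ : φ.isEqualizer) (htr : roundTrans R φ f f') (p q : Fin n) : f' p = f' q := by
  obtain ⟨Hs, -, hsat, hupd⟩ := htr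
  rw [hupd p, hupd q, hsat.1 hφ p q]

lemma roundTrans_solo {R : Round} {φ : RoundPred} {n : ℕ} {f f' : Fin n → Val} {v : ℕ}
    (htr : roundTrans R φ f f') (hf : ∀ p, f p = some v)
    (hU : 0 ≤ R.thrU) (hUφ : R.thrU ≤ φ.thrVal) :
    ∀ p, f' p = some v := by
  obtain ⟨Hs, hsub, hsat, hupd⟩ := htr
  intro p
  rw [hupd p]
  refine Round.update_eq_of_forall_eq_some hU (fun x hx => ?_) ?_
  · obtain ⟨q, rfl⟩ := msetOf_mem (Multiset.mem_of_le (hsub p) hx)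
    exact hf q
  · exact lt_of_le_of_lt (mul_le_mul_of_nonneg_right hUφ (Nat.cast_nonneg n))
      (hsat.thrVal_mul_lt p)

lemma isBias.card_le {θ : ℝ} {n : ℕ} {f : Fin n → Val} (hf : isBias θ f)
    {H : Multiset Val} (hH : H ≤ msetOf f) {v : ℕ} (hv : ∀ x ∈ H, x = some v) :
    (H.card : ℝ) ≤ max θ (1 - θ) * n := by
  have hHv : H.card ≤ (Finset.univ.filter fun p => f p = some v).card := by
    rw [← msetOf_count, ← Multiset.count_eq_card.mpr fun x hx => (hv x hx).symm]
    exact Multiset.count_le_of_le _ hH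
  have hsplit := Finset.card_filter_add_card_filter_not
    (s := (Finset.univ : Finset (Fin n))) (p := fun p => f p = some bVal)
  rw [Finset.card_univ, Fintype.card_fin] at hsplit
  by_cases hvb : v = bVal
  · subst hvb
    calc (H.card : ℝ) ≤ θ * n := hf.2 ▸ by exact_mod_cast hHv
      _ ≤ _ := mul_le_mul_of_nonneg_right (le_max_left _ _) (Nat.cast_nonneg n)
  · have hva : (Finset.univ.filter fun p => f p = some v).card
        ≤ (Finset.univ.filter fun p => ¬ f p = some bVal).card :=
      Finset.card_le_card fun p hp => by
        rw [Finset.mem_filter] at hp ⊢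
        exact ⟨hp.1, fun hb => hvb (Option.some.inj (hp.2.symm.trans hb))⟩
    have hcast : (H.card : ℝ) + θ * n ≤ n := by
      rw [← hf.2]; exact_mod_cast (by omega : H.card + _ ≤ n)
    calc (H.card : ℝ) ≤ (1 - θ) * n := by linarith
      _ ≤ _ := mul_le_mul_of_nonneg_right (le_max_right _ _) (Nat.cast_nonneg n)

lemma Algo.roundTrans_mem_of_not_preserving {A : Algo} {ψ : PhasePred} {i n : ℕ}
    {f f' : Fin n → Val} {V : Set Val} (hnp : ¬ A.preserving ψ i) (hV : none ∉ V)
    (htr : roundTrans (A.rounds i) (ψ i) f f') (hf : ∀ p, f p ∈ V) :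
    ∀ p, f' p ∈ V := by
  simp only [Algo.preserving, not_or, not_not, not_lt, max_le_iff] at hnp
  obtain ⟨hU, hM, hUψ, hMψ⟩ := hnp
  exact roundTrans_mem_of_hasUni_hasMult hV htr hf hU hM hMψ fun H _ hψH _ _ =>
    lt_of_le_of_lt (mul_le_mul_of_nonneg_right hUψ (Nat.cast_nonneg n)) hψH

/-- When `ψ` does not dominate `thr_u^1`, the bound on `θ` keeps every single-valued heard-of
multiset below `ψ`'s threshold, so the hypothesis on `H` cannot hold. -/
lemma Algo.unifier.thrU_one_mul_lt {A : Algo} {ψ : PhasePred} (hu : A.unifier ψ)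
    {θ : ℝ} {n : ℕ} {f : Fin n → Val} (hf : isBias θ f)
    (hθ : A.thrU 1 ≤ A.thrM 1 ∨ (1 - A.borderThr ≤ θ ∧ θ ≤ A.borderThr))
    {H : Multiset Val} (hH : H ≤ msetOf f) (hψH : (ψ 1).thrVal * n < (H.card : ℝ))
    {v : ℕ} (hv : ∀ x ∈ H, x = some v) :
    A.thrU 1 * n < (H.card : ℝ) := by
  by_cases hUψ : A.thrU 1 ≤ (ψ 1).thrVal
  · exact lt_of_le_of_lt (mul_le_mul_of_nonneg_right hUψ (Nat.cast_nonneg n)) hψH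
  · exfalso
    obtain ⟨hlo, hhi⟩ := hθ.resolve_left fun h => hUψ (h.trans hu.1)
    have hθψ : max θ (1 - θ) ≤ (ψ 1).thrVal :=
      (max_le hhi (by linarith)).trans (hu.2.1.resolve_left hUψ)
    have := mul_le_mul_of_nonneg_right hθψ (Nat.cast_nonneg n)
    linarith [hf.card_le hH hv]

lemma Algo.roundTrans_one_binary {A : Algo} {ψ : PhasePred} (hs : A.syntSafe)
    (hu : A.unifier ψ) {θ : ℝ} {n : ℕ} {f f' : Fin n → Val} (hf : isBias θ f)
    (hθ : A.thrU 1 ≤ A.thrM 1 ∨ (1 - A.borderThr ≤ θ ∧ θ ≤ A.borderThr))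
    (htr : roundTrans (A.rounds 1) (ψ 1) f f') :
    ∀ p, f' p ∈ ({some aVal, some bVal} : Set Val) :=
  roundTrans_mem_of_hasUni_hasMult (by simp) htr hf.1
    (hs.2.1 1 le_rfl (by linarith [A.two_le_r])) hs.1 hu.1
    fun _ hH hψH _ hv => hu.thrU_one_mul_lt hf hθ hH hψH hv

theorem unifier_phase_general (A : Algo) (ψ : PhasePred)
    (hs : A.syntSafe)
    (hu : A.unifier ψ) :
    ∀ (θ : ℝ) (n : ℕ), 0 < n → ∀ f d f' d' : Fin n → Val,
      isBias θ f →
      phaseTrans A ψ f d f' d' →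
      (A.thrU 1 ≤ A.thrM 1 ∨ (1 - A.borderThr ≤ θ ∧ θ ≤ A.borderThr)) →
      f' = soloB n ∨ f' = soloA n := by
  rintro θ n hn f d f' d' hbias ⟨g, hg0, hround, hf', -⟩ hθ
  obtain ⟨e, he1, heir, heq, hnonpres, hsafe⟩ := hu.2.2
  have hir := A.ir_lt_r
  have hstep : ∀ j, j < A.r → roundTrans (A.rounds (j + 1)) (ψ (j + 1)) (g j) (g (j + 1)) :=
    fun j hj => hround (j + 1) (by omega) hj
  have hbinary : ∀ j, 1 ≤ j → j ≤ e → ∀ p, g j p ∈ ({some aVal, some bVal} : Set Val) := by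
    intro j hj hje
    induction j, hj using Nat.le_induction with
    | base => exact A.roundTrans_one_binary hs hu hbias hθ (hg0 ▸ hstep 0 (by omega))
    | succ j hj ih =>
      exact A.roundTrans_mem_of_not_preserving (hnonpres _ (by omega) hje) (by simp)
        (hstep j (by omega)) (ih (by omega))
  obtain ⟨v, hv, hve⟩ : ∃ v, (v = aVal ∨ v = bVal) ∧ g e ⟨0, hn⟩ = some v := by
    rcases hbinary e he1 le_rfl ⟨0, hn⟩ with h | h
    exacts [⟨aVal, Or.inl rfl, h⟩, ⟨bVal, Or.inr rfl, h⟩]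
  have hsolo : ∀ j, e ≤ j → j ≤ A.ir → ∀ p, g j p = some v := by
    intro j hj hjir
    induction j, hj using Nat.le_induction with
    | base => exact fun p => hve ▸ roundTrans_eq_of_isEqualizer heq (hround e he1 (by omega)) p _
    | succ j hj ih =>
      obtain ⟨hU, hUψ⟩ := hsafe (j + 1) (by omega) hjir
      exact roundTrans_solo (hstep j (by omega)) (ih (by omega)) hU hUψ
  have hf'v : f' = fun _ => some v := funext fun p => by simp [hf' p, hsolo A.ir heir le_rfl p]
  rcases hv with rfl | rfl
  exacts [Or.inr hf'v, Or.inl hf'v]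

/-- Lemma 14.  Consider a syntactically safe core-language
algorithm satisfying Assumption (A), and a unifier `ψ` whose round predicates
imply those of the global predicate `gl`.  If `bias(θ) →ψ f'` is a phase
transition and either `thr_u^1 ≤ thr_m^{1,k}` or `1 − thr̄ ≤ θ ≤ thr̄`, then
`f' = solo` or `f' = solo^a`. -/
theorem unifier_phase (A : Algo) (gl ψ : PhasePred)
    (hs : A.syntSafe) (hA : A.assumptionA gl)
    (himp : predImplies A ψ gl)
    (hu : A.unifier ψ) :
    ∀ (θ : ℝ) (n : ℕ), 0 < n → ∀ f d f' d' : Fin n → Val,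
      isBias θ f →
      phaseTrans A ψ f d f' d' →
      (A.thrU 1 ≤ A.thrM 1 ∨ (1 - A.borderThr ≤ θ ∧ θ ≤ A.borderThr)) →
      f' = soloB n ∨ f' = soloA n :=
  unifier_phase_general A ψ hs hu

end HO
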